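/- If G is a graph with γ_g(G) = 2γ(G) − 1 and H is a spanning subgraph of G with γ(H) = γ(G), then γ_g(H) ≤ γ_g(G). -/

import Mathlib

/-
Fix a minimum dominating set `S` of a graph. As long as the game is not over, some vertex of `S`
still has an undominated closed neighbourhood, so Dominator can always play one; doing so uses it
up, and no move ever makes a vertex of `S` playable again. Hence Dominator makes at most `|S|`
moves, the game lasts at most `2γ − 1` moves, and γ_g(H) ≤ 2γ(H) − 1 = 2γ(G) − 1 = γ_g(G).
-/

open Finset

namespace DomGame

variable {V : Type*} [Fintype V] [DecidableEq V]

/-- Closed neighborhood of `v` in `G`, as a `Finset`. -/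
noncomputable def cn (G : SimpleGraph V) (v : V) : Finset V :=
  haveI : DecidablePred (fun u : V => u = v ∨ G.Adj v u) := fun _ => Classical.propDecidable _
  Finset.univ.filter (fun u : V => u = v ∨ G.Adj v u)

/-- Value (number of remaining moves, optimal play) of the domination game on `G`,
with fuel, where `D` is the set of already dominated vertices and `who = true`
means Dominator is to move (minimizing); `who = false` means Staller (maximizing). -/
noncomputable def auxVal (G : SimpleGraph V) : ℕ → Bool → Finset V → ℕ
  | 0, _, _ => 0
  | n + 1, who, D =>
    if D = Finset.univ then 0
    else
      haveI : DecidablePred (fun v : V => ¬ cn G v ⊆ D) := fun _ => Classical.propDecidable _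
      let moves : Finset V := Finset.univ.filter (fun v : V => ¬ cn G v ⊆ D)
      if who then
        WithTop.untopD 0 ((moves.image (fun v => 1 + auxVal G n false (D ∪ cn G v))).min)
      else
        moves.sup (fun v => 1 + auxVal G n true (D ∪ cn G v))

/-- Remaining moves of the domination game on the partially dominated graph `(G, D)`,
Dominator to move, both players optimal. -/
noncomputable def gVal (G : SimpleGraph V) (D : Finset V) : ℕ :=
  auxVal G (Fintype.card V) true D

/-- Remaining moves, Staller to move. -/
noncomputable def gVal' (G : SimpleGraph V) (D : Finset V) : ℕ :=
  auxVal G (Fintype.card V) false D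

/-- The game domination number (Dominator starts). -/
noncomputable def gammaG (G : SimpleGraph V) : ℕ := gVal G ∅

/-- The Staller-start game domination number. -/
noncomputable def gammaG' (G : SimpleGraph V) : ℕ := gVal' G ∅

/-- `S` is a dominating set of `G`. -/
def IsDomSet (G : SimpleGraph V) (S : Finset V) : Prop :=
  ∀ v : V, ∃ u ∈ S, u = v ∨ G.Adj u v

/-- The domination number of `G`. -/
noncomputable def gamma (G : SimpleGraph V) : ℕ :=
  sInf {n | ∃ S : Finset V, IsDomSet G S ∧ S.card = n}

end DomGame

namespace DomGame

variable {V : Type*} [Fintype V]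

theorem mem_cn (G : SimpleGraph V) (u v : V) : v ∈ cn G u ↔ v = u ∨ G.Adj u v := by
  simp [cn]

theorem exists_isDomSet_card_eq_gamma (G : SimpleGraph V) :
    ∃ S : Finset V, IsDomSet G S ∧ #S = gamma G :=
  Nat.sInf_mem (s := {n | ∃ S : Finset V, IsDomSet G S ∧ #S = n})
    ⟨_, univ, fun v => ⟨v, mem_univ v, Or.inl rfl⟩, rfl⟩

noncomputable def legalMoves (G : SimpleGraph V) (S D : Finset V) : Finset V :=
  haveI : DecidablePred (fun s : V => ¬ cn G s ⊆ D) := fun _ => Classical.propDecidable _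
  S.filter (fun s => ¬ cn G s ⊆ D)

theorem mem_legalMoves {G : SimpleGraph V} {S D : Finset V} {s : V} :
    s ∈ legalMoves G S D ↔ s ∈ S ∧ ¬ cn G s ⊆ D := by
  simp [legalMoves]

theorem legalMoves_empty (G : SimpleGraph V) (S : Finset V) : legalMoves G S ∅ = S := by
  ext s
  simp only [mem_legalMoves, and_iff_left_iff_imp]
  exact fun _ h => notMem_empty s (h ((mem_cn G s s).2 (Or.inl rfl)))

theorem legalMoves_anti {G : SimpleGraph V} {S D D' : Finset V} (h : D ⊆ D') :
    legalMoves G S D' ⊆ legalMoves G S D := fun _ hs =>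
  mem_legalMoves.2 ⟨(mem_legalMoves.1 hs).1, fun hsub => (mem_legalMoves.1 hs).2 (hsub.trans h)⟩

theorem ne_univ_of_not_cn_subset {G : SimpleGraph V} {D : Finset V} {v : V}
    (hv : ¬ cn G v ⊆ D) : D ≠ univ := by
  rintro rfl
  exact hv (subset_univ _)

theorem legalMoves_nonempty {G : SimpleGraph V} {S D : Finset V} (hS : IsDomSet G S)
    (hD : D ≠ univ) : (legalMoves G S D).Nonempty := by
  obtain ⟨v, hv⟩ : ∃ v, v ∉ D := by
    by_contra! h
    exact hD (eq_univ_iff_forall.2 h)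
  obtain ⟨u, huS, hu⟩ := hS v
  refine ⟨u, mem_legalMoves.2 ⟨huS, fun hsub => hv (hsub ?_)⟩⟩
  rw [mem_cn]
  exact hu.imp Eq.symm id

variable [DecidableEq V]

theorem card_legalMoves_union_cn_lt {G : SimpleGraph V} {S D : Finset V} {s : V}
    (hs : s ∈ legalMoves G S D) :
    #(legalMoves G S (D ∪ cn G s)) < #(legalMoves G S D) := by
  refine card_lt_card ⟨legalMoves_anti subset_union_left, fun hsub => ?_⟩
  exact (mem_legalMoves.1 (hsub hs)).2 subset_union_right

theorem auxVal_univ (G : SimpleGraph V) (n : ℕ) (who : Bool) : auxVal G n who univ = 0 := by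
  cases n <;> simp [auxVal]

theorem auxVal_succ_true_le {G : SimpleGraph V} {D : Finset V} {v : V} (hv : ¬ cn G v ⊆ D)
    (n : ℕ) : auxVal G (n + 1) true D ≤ 1 + auxVal G n false (D ∪ cn G v) := by
  rw [auxVal, if_neg (ne_univ_of_not_cn_subset hv), if_pos rfl]
  exact WithTop.untopD_le <| min_le <| mem_image_of_mem _ <|
    (@mem_filter V _ (fun _ => Classical.propDecidable _) _ _).2 ⟨mem_univ v, hv⟩

theorem auxVal_succ_false_le {G : SimpleGraph V} {D : Finset V} {n m : ℕ}
    (h : ∀ v, ¬ cn G v ⊆ D → 1 + auxVal G n true (D ∪ cn G v) ≤ m) :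
    auxVal G (n + 1) false D ≤ m := by
  by_cases hD : D = univ
  · exact hD ▸ auxVal_univ G (n + 1) false ▸ Nat.zero_le m
  rw [auxVal, if_neg hD, if_neg Bool.false_ne_true]
  exact Finset.sup_le fun v hv =>
    h v ((@mem_filter V _ (fun _ => Classical.propDecidable _) _ _).1 hv).2

/-- Dominator's strategy: always play a legal vertex of `S`. -/
theorem auxVal_le_card_legalMoves {G : SimpleGraph V} {S : Finset V} (hS : IsDomSet G S)
    (n : ℕ) (D : Finset V) :
    auxVal G n true D ≤ 2 * #(legalMoves G S D) - 1 ∧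
      auxVal G n false D ≤ 2 * #(legalMoves G S D) := by
  induction n generalizing D with
  | zero => simp [auxVal]
  | succ n ih =>
    refine ⟨?_, auxVal_succ_false_le fun v hv => ?_⟩
    · by_cases hD : D = univ
      · simp [hD, auxVal_univ]
      obtain ⟨s, hs⟩ := legalMoves_nonempty hS hD
      have hstep := auxVal_succ_true_le (mem_legalMoves.1 hs).2 n
      have hnext := (ih (D ∪ cn G s)).2
      have hcard := card_legalMoves_union_cn_lt hs
      omega
    · have hnonempty := (legalMoves_nonempty hS (ne_univ_of_not_cn_subset hv)).card_pos
      have hnext := (ih (D ∪ cn G v)).1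
      have hcard : #(legalMoves G S (D ∪ cn G v)) ≤ #(legalMoves G S D) :=
        card_le_card (legalMoves_anti subset_union_left)
      omega

theorem gammaG_le_two_mul_gamma_sub_one (G : SimpleGraph V) : gammaG G ≤ 2 * gamma G - 1 := by
  obtain ⟨S, hS, hcard⟩ := exists_isDomSet_card_eq_gamma G
  have h := (auxVal_le_card_legalMoves hS (Fintype.card V) ∅).1
  rwa [legalMoves_empty, hcard] at h

end DomGame

theorem stmt13_general {V : Type*} [Fintype V] [DecidableEq V] (G H : SimpleGraph V)
    (hG : DomGame.gammaG G = 2 * DomGame.gamma G - 1)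
    (hdom : DomGame.gamma H = DomGame.gamma G) :
    DomGame.gammaG H ≤ DomGame.gammaG G := by
  calc DomGame.gammaG H ≤ 2 * DomGame.gamma H - 1 := DomGame.gammaG_le_two_mul_gamma_sub_one H
    _ = DomGame.gammaG G := by rw [hdom, hG]

/-- if γ_g(G) = 2γ(G) − 1 and H is a spanning subgraph of G with
γ(H) = γ(G), then γ_g(H) ≤ γ_g(G). -/
theorem stmt13 {V : Type*} [Fintype V] [DecidableEq V] (G H : SimpleGraph V)
    (hHG : H ≤ G) (hG : DomGame.gammaG G = 2 * DomGame.gamma G - 1)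
    (hdom : DomGame.gamma H = DomGame.gamma G) :
    DomGame.gammaG H ≤ DomGame.gammaG G :=
  stmt13_general G H hG hdom
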